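/- For λ > 0 large, δ = d/(λ ln λ) with fixed d > 0, and a bounded domain Ω ⊂ ℝ⁴ containing ξ, the correction W_{λ,δ,ξ}(x) = αλδ W(√λ|x−ξ|) (with W(r)=1/r²−K₁(r)/r, α=2√2) satisfies ‖W_{λ,δ,ξ}‖_{L⁴(Ω)}⁴ ≤ C λ² δ⁴ (ln λ)⁴ → 0 as λ → ∞. -/

import Mathlib

noncomputable section

open MeasureTheory Filter

abbrev E4 := EuclideanSpace ℝ (Fin 4)

def besselK1 (r : ℝ) : ℝ :=
  ∫ t in Set.Ioi (0:ℝ), Real.exp (-r * Real.cosh t) * Real.cosh t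

def Wfun (r : ℝ) : ℝ := 1 / r^2 - besselK1 r / r

def Wcorr (lam δ : ℝ) (ξ : E4) (x : E4) : ℝ :=
  (2 * Real.sqrt 2) * lam * δ * Wfun (Real.sqrt lam * ‖x - ξ‖)


/-! The substitution `u = sinh t` turns `K₁(r)` into `∫₀^∞ e^{-r√(1+u²)} du`, so
`1/r - K₁(r) = ∫₀^∞ (e^{-ru} - e^{-r√(1+u²)}) du`, which lies between `0` and
`r ∫₀^∞ u^{-1/2} e^{-ru} du = √(π r)`. Hence `0 ≤ W(s) ≤ min (s⁻², √(π/s))`, and `y ↦ W(|y|)⁴` is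
integrable on `ℝ⁴`. The change of variables `y = √λ (x - ξ)` bounds the integral over `Ω` by
`64 λ⁴ δ⁴ · λ⁻² ∫_{ℝ⁴} W(|y|)⁴`, which is `O(λ² δ⁴)`, and `(ln λ)⁴ ≥ 1` once `λ ≥ e`. -/

open Real Set

lemma besselK1_nonneg (r : ℝ) : 0 ≤ besselK1 r :=
  setIntegral_nonneg measurableSet_Ioi fun _ _ => by positivity

lemma besselK1_eq_integral_exp_sqrt (r : ℝ) :
    besselK1 r = ∫ u in Ioi (0 : ℝ), exp (-r * √(1 + u ^ 2)) := by
  have hsinh : sinh '' Ioi 0 = Ioi 0 := by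
    ext u
    refine ⟨?_, fun hu => ⟨arsinh u, arsinh_pos_iff.mpr hu, sinh_arsinh u⟩⟩
    rintro ⟨t, ht, rfl⟩
    exact sinh_pos_iff.mpr ht
  rw [← hsinh, integral_image_eq_integral_abs_deriv_smul measurableSet_Ioi
    (fun t _ => (hasDerivAt_sinh t).hasDerivWithinAt) sinh_injective.injOn, besselK1]
  refine setIntegral_congr_fun measurableSet_Ioi fun t _ => ?_
  rw [← cosh_sq', sqrt_sq (cosh_pos t).le, abs_of_pos (cosh_pos t), smul_eq_mul, mul_comm]

lemma le_sqrt_one_add_sq (u : ℝ) : u ≤ √(1 + u ^ 2) :=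
  le_sqrt_of_sq_le (by linarith)

lemma integrableOn_exp_neg_mul_sqrt_one_add_sq {r : ℝ} (hr : 0 < r) :
    IntegrableOn (fun u => exp (-r * √(1 + u ^ 2))) (Ioi 0) := by
  refine (exp_neg_integrableOn_Ioi 0 hr).mono' (by fun_prop) (.of_forall fun u => ?_)
  rw [norm_of_nonneg (exp_pos _).le, exp_le_exp]
  nlinarith [le_sqrt_one_add_sq u]

lemma sqrt_one_add_sq_sub_le {u : ℝ} (hu : 0 < u) : √(1 + u ^ 2) - u ≤ u ^ (-(1 / 2) : ℝ) := by
  obtain ⟨t, ht, rfl⟩ : ∃ t > 0, u = t ^ 2 := ⟨√u, sqrt_pos.mpr hu, (sq_sqrt hu.le).symm⟩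
  rw [rpow_neg (by positivity), ← sqrt_eq_rpow, sqrt_sq ht.le, sub_le_iff_le_add,
    sqrt_le_iff]
  refine ⟨by positivity, ?_⟩
  -- after squaring, this is `1 ≤ 2 t + t⁻²`
  have h : 1 ≤ 2 * t + (t ^ 2)⁻¹ := by
    rcases le_or_gt (1 / 2) t with h | h
    · linarith [inv_nonneg.mpr (sq_nonneg t)]
    · have : 4 ≤ (t ^ 2)⁻¹ := by
        rw [le_inv_comm₀ (by norm_num) (by positivity)]; nlinarith
      linarith
  have : (t ^ 2 + t⁻¹) ^ 2 = (t ^ 2) ^ 2 + 2 * t + (t ^ 2)⁻¹ := by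
    field_simp; ring
  nlinarith

lemma inv_sub_besselK1_eq_integral {r : ℝ} (hr : 0 < r) :
    r⁻¹ - besselK1 r = ∫ u in Ioi (0 : ℝ), (exp (-r * u) - exp (-r * √(1 + u ^ 2))) := by
  rw [integral_sub (exp_neg_integrableOn_Ioi 0 hr) (integrableOn_exp_neg_mul_sqrt_one_add_sq hr),
    ← besselK1_eq_integral_exp_sqrt, integral_exp_mul_Ioi (neg_neg_of_pos hr)]
  simp

lemma exp_neg_mul_sub_exp_neg_mul_sqrt_nonneg {r : ℝ} (hr : 0 < r) (u : ℝ) :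
    0 ≤ exp (-r * u) - exp (-r * √(1 + u ^ 2)) := by
  rw [sub_nonneg, exp_le_exp]
  nlinarith [le_sqrt_one_add_sq u]

lemma besselK1_le_inv {r : ℝ} (hr : 0 < r) : besselK1 r ≤ r⁻¹ := by
  rw [← sub_nonneg, inv_sub_besselK1_eq_integral hr]
  exact setIntegral_nonneg measurableSet_Ioi fun u _ =>
    exp_neg_mul_sub_exp_neg_mul_sqrt_nonneg hr u

lemma integrableOn_rpow_neg_half_mul_exp_neg_mul {r : ℝ} (hr : 0 < r) :
    IntegrableOn (fun u : ℝ => u ^ (-(1 / 2) : ℝ) * exp (-r * u)) (Ioi 0) := by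
  simpa only [rpow_one] using
    integrableOn_rpow_mul_exp_neg_mul_rpow (by norm_num : (-1 : ℝ) < -(1 / 2)) one_pos hr

lemma integral_rpow_neg_half_mul_exp_neg_mul {r : ℝ} (hr : 0 < r) :
    ∫ u in Ioi (0 : ℝ), u ^ (-(1 / 2) : ℝ) * exp (-r * u) = √π / √r := by
  have h := integral_rpow_mul_exp_neg_mul_rpow one_pos (by norm_num : (-1 : ℝ) < -(1 / 2)) hr
  simp only [rpow_one, div_one, mul_one] at h
  rw [h, show (-(1 / 2) : ℝ) + 1 = 1 / 2 by norm_num, Gamma_one_half_eq, rpow_neg hr.le,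
    ← sqrt_eq_rpow, div_eq_inv_mul]

lemma inv_sub_besselK1_le {r : ℝ} (hr : 0 < r) : r⁻¹ - besselK1 r ≤ √π * √r := by
  have hbound : √π * √r = ∫ u in Ioi (0 : ℝ), r * (u ^ (-(1 / 2) : ℝ) * exp (-r * u)) := by
    rw [integral_const_mul, integral_rpow_neg_half_mul_exp_neg_mul hr]
    field_simp
    rw [sq_sqrt hr.le]
  rw [inv_sub_besselK1_eq_integral hr, hbound]
  refine setIntegral_mono_on ((exp_neg_integrableOn_Ioi 0 hr).sub
    (integrableOn_exp_neg_mul_sqrt_one_add_sq hr))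
    ((integrableOn_rpow_neg_half_mul_exp_neg_mul hr).const_mul r) measurableSet_Ioi
    fun u (hu : 0 < u) => ?_
  -- `1 - e^{-x} ≤ x` with `x = r (√(1 + u²) - u) ≤ r u^{-1/2}`
  have hx := add_one_le_exp (-(r * (√(1 + u ^ 2) - u)))
  have hgap := mul_le_mul_of_nonneg_left (sqrt_one_add_sq_sub_le hu) hr.le
  calc exp (-r * u) - exp (-r * √(1 + u ^ 2))
      = exp (-r * u) * (1 - exp (-(r * (√(1 + u ^ 2) - u)))) := by
        rw [mul_sub, ← exp_add]; ring_nf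
    _ ≤ exp (-r * u) * (r * u ^ (-(1 / 2) : ℝ)) := by
        gcongr; linarith
    _ = r * (u ^ (-(1 / 2) : ℝ) * exp (-r * u)) := by ring

lemma Wfun_eq_div (s : ℝ) : Wfun s = (s⁻¹ - besselK1 s) / s := by
  rw [Wfun]; ring

lemma Wfun_nonneg {s : ℝ} (hs : 0 < s) : 0 ≤ Wfun s := by
  rw [Wfun_eq_div]
  exact div_nonneg (sub_nonneg.mpr (besselK1_le_inv hs)) hs.le

lemma Wfun_pow_four_le_pi_sq_div_sq {s : ℝ} (hs : 0 < s) : Wfun s ^ 4 ≤ π ^ 2 / s ^ 2 := by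
  have hW : Wfun s ≤ √π / √s := by
    rw [Wfun_eq_div, div_le_div_iff₀ hs (sqrt_pos.mpr hs)]
    calc (s⁻¹ - besselK1 s) * √s ≤ √π * √s * √s := by
          gcongr; exact inv_sub_besselK1_le hs
      _ = √π * s := by rw [mul_assoc, mul_self_sqrt hs.le]
  calc Wfun s ^ 4 ≤ (√π / √s) ^ 4 := by gcongr; exact Wfun_nonneg hs
    _ = π ^ 2 / s ^ 2 := by
      rw [div_pow, show 4 = 2 * 2 by rfl, pow_mul, pow_mul, sq_sqrt pi_pos.le, sq_sqrt hs.le]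

lemma Wfun_pow_four_le_one_div_pow_eight {s : ℝ} (hs : 0 < s) : Wfun s ^ 4 ≤ 1 / s ^ 8 := by
  have hW : Wfun s ≤ 1 / s ^ 2 := by
    rw [Wfun, sub_le_self_iff]
    exact div_nonneg (besselK1_nonneg s) hs.le
  calc Wfun s ^ 4 ≤ (1 / s ^ 2) ^ 4 := by gcongr; exact Wfun_nonneg hs
    _ = 1 / s ^ 8 := by rw [div_pow, one_pow, ← pow_mul]

@[fun_prop]
lemma measurable_besselK1 : Measurable besselK1 := by
  have hc : Continuous (Function.uncurry fun r t : ℝ => exp (-r * cosh t) * cosh t) := by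
    fun_prop
  exact (hc.stronglyMeasurable.integral_prod_right (ν := volume.restrict (Ioi 0))).measurable

@[fun_prop]
lemma measurable_Wfun : Measurable Wfun := by
  unfold Wfun
  fun_prop

section Radial

variable {E : Type*} [NormedAddCommGroup E] [NormedSpace ℝ E] [FiniteDimensional ℝ E]
  [MeasurableSpace E] [BorelSpace E] (μ : Measure E) [μ.IsAddHaarMeasure]

open Module

-- `Wfun s ^ 4` is `O(s⁻²)` at `0` and `O(s⁻⁸)` at infinity, whence the range of dimensions.
lemma integrable_Wfun_norm_pow_four (h3 : 3 ≤ finrank ℝ E) (h7 : finrank ℝ E ≤ 7) :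
    Integrable (fun x : E => Wfun ‖x‖ ^ 4) μ := by
  have : Nontrivial E := nontrivial_of_finrank_pos (R := ℝ) (by omega)
  rw [integrable_fun_norm_addHaar μ (f := fun s => Wfun s ^ 4),
    ← Ioc_union_Ioi_eq_Ioi zero_le_one]
  have hmeas : ∀ s, AEStronglyMeasurable (fun y : ℝ => y ^ (finrank ℝ E - 1) • Wfun y ^ 4)
      (volume.restrict s) := fun s => by fun_prop
  refine .union (.of_bound measure_Ioc_lt_top (hmeas _) (π ^ 2) ?_)
    ((integrableOn_Ioi_rpow_of_lt (by norm_num : (-2 : ℝ) < -1) one_pos).mono' (hmeas _) ?_)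
  · refine (ae_restrict_iff' measurableSet_Ioc).mpr (.of_forall fun y ⟨hy0, hy1⟩ => ?_)
    rw [smul_eq_mul, norm_mul, norm_of_nonneg (by positivity),
      norm_of_nonneg (by positivity)]
    calc y ^ (finrank ℝ E - 1) * Wfun y ^ 4 ≤ y ^ 2 * (π ^ 2 / y ^ 2) :=
          mul_le_mul (pow_le_pow_of_le_one hy0.le hy1 (by omega))
            (Wfun_pow_four_le_pi_sq_div_sq hy0) (by positivity) (by positivity)
      _ = π ^ 2 := by field_simp
  · refine (ae_restrict_iff' measurableSet_Ioi).mpr (.of_forall fun y (hy : 1 < y) => ?_)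
    have hy0 : 0 < y := one_pos.trans hy
    rw [smul_eq_mul, norm_mul, norm_of_nonneg (by positivity), norm_of_nonneg (by positivity),
      rpow_neg hy0.le, rpow_two]
    calc y ^ (finrank ℝ E - 1) * Wfun y ^ 4 ≤ y ^ 6 * (1 / y ^ 8) :=
          mul_le_mul (pow_le_pow_right₀ hy.le (by omega))
            (Wfun_pow_four_le_one_div_pow_eight hy0) (by positivity) (by positivity)
      _ = (y ^ 2)⁻¹ := by field_simp

lemma setIntegral_comp_mul_norm_sub_le {f : ℝ → ℝ} (hf : ∀ s, 0 ≤ f s)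
    (hfi : Integrable (fun x : E => f ‖x‖) μ) {c : ℝ} (hc : 0 < c) (Ω : Set E) (ξ : E) :
    ∫ x in Ω, f (c * ‖x - ξ‖) ∂μ ≤ (c ^ finrank ℝ E)⁻¹ * ∫ x, f ‖x‖ ∂μ := by
  have hscale : (fun x => f (c * ‖x - ξ‖)) = fun x => f ‖c • (x - ξ)‖ := by
    ext x; rw [norm_smul, norm_of_nonneg hc.le]
  have hint : Integrable (fun x => f (c * ‖x - ξ‖)) μ := by
    rw [hscale]
    exact ((integrable_comp_smul_iff μ (fun y => f ‖y‖) hc.ne').mpr hfi).comp_sub_right ξ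
  calc ∫ x in Ω, f (c * ‖x - ξ‖) ∂μ ≤ ∫ x, f (c * ‖x - ξ‖) ∂μ :=
        setIntegral_le_integral hint (.of_forall fun x => hf _)
    _ = (c ^ finrank ℝ E)⁻¹ * ∫ x, f ‖x‖ ∂μ := by
        rw [hscale, integral_sub_right_eq_self (fun y => f ‖c • y‖) ξ,
          Measure.integral_comp_smul μ (fun y => f ‖y‖), smul_eq_mul,
          abs_of_pos (by positivity)]

end Radial

lemma Wcorr_pow_four (lam δ : ℝ) (ξ x : E4) :
    Wcorr lam δ ξ x ^ 4 = 64 * lam ^ 4 * δ ^ 4 * Wfun (√lam * ‖x - ξ‖) ^ 4 := by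
  have h2 : √2 ^ 4 = 4 := by rw [show 4 = 2 * 2 by rfl, pow_mul, sq_sqrt zero_le_two]; norm_num
  rw [Wcorr, mul_pow, mul_pow, mul_pow, mul_pow, h2]
  ring

lemma setIntegral_Wcorr_pow_four_le {lam : ℝ} (hlam : 0 < lam) (δ : ℝ) (ξ : E4) (Ω : Set E4) :
    ∫ x in Ω, Wcorr lam δ ξ x ^ 4 ≤ 64 * (∫ x : E4, Wfun ‖x‖ ^ 4) * lam ^ 2 * δ ^ 4 := by
  have hscale := setIntegral_comp_mul_norm_sub_le volume (f := fun s => Wfun s ^ 4)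
    (fun s => by positivity)
    (integrable_Wfun_norm_pow_four (E := E4) volume (by norm_num [finrank_euclideanSpace_fin])
      (by norm_num [finrank_euclideanSpace_fin])) (sqrt_pos.mpr hlam) Ω ξ
  rw [finrank_euclideanSpace_fin, show √lam ^ 4 = lam ^ 2 by
    rw [show 4 = 2 * 2 by rfl, pow_mul, sq_sqrt hlam.le]] at hscale
  simp_rw [Wcorr_pow_four]
  rw [integral_const_mul]
  calc 64 * lam ^ 4 * δ ^ 4 * ∫ x in Ω, Wfun (√lam * ‖x - ξ‖) ^ 4
      ≤ 64 * lam ^ 4 * δ ^ 4 * ((lam ^ 2)⁻¹ * ∫ x : E4, Wfun ‖x‖ ^ 4) := by gcongr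
    _ = 64 * (∫ x : E4, Wfun ‖x‖ ^ 4) * lam ^ 2 * δ ^ 4 := by field_simp

theorem Wcorr_L4_small_general (d : ℝ) (Ω : Set E4) (ξ : E4) :
    ∃ C > 0, ∃ lam0 : ℝ,
      (∀ lam : ℝ, lam0 ≤ lam →
        (∫ x in Ω, (Wcorr lam (d / (lam * Real.log lam)) ξ x)^4)
          ≤ C * lam^2 * (d / (lam * Real.log lam))^4 * (Real.log lam)^4) ∧
      Tendsto (fun lam : ℝ =>
          C * lam^2 * (d / (lam * Real.log lam))^4 * (Real.log lam)^4)
        atTop (nhds 0) := by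
  set M := ∫ x : E4, Wfun ‖x‖ ^ 4
  have hM : 0 ≤ M := integral_nonneg fun x => by positivity
  have hlarge : ∀ lam, exp 1 ≤ lam → 0 < lam ∧ 1 ≤ log lam := fun lam hlam =>
    ⟨(exp_pos 1).trans_le hlam, (le_log_iff_exp_le ((exp_pos 1).trans_le hlam)).mpr hlam⟩
  refine ⟨64 * M + 1, by positivity, exp 1, fun lam hlam => ?_, ?_⟩
  · obtain ⟨hlam0, hlog⟩ := hlarge lam hlam
    calc _ ≤ 64 * M * lam ^ 2 * (d / (lam * log lam)) ^ 4 :=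
          setIntegral_Wcorr_pow_four_le hlam0 _ ξ Ω
      _ ≤ (64 * M + 1) * lam ^ 2 * (d / (lam * log lam)) ^ 4 * 1 := by
          rw [mul_one]; gcongr; linarith
      _ ≤ _ := by gcongr; exact one_le_pow₀ hlog
  · have hev : (fun lam : ℝ => (64 * M + 1) * d ^ 4 * (lam ^ 2)⁻¹) =ᶠ[atTop]
        fun lam => (64 * M + 1) * lam ^ 2 * (d / (lam * log lam)) ^ 4 * log lam ^ 4 := by
      filter_upwards [eventually_ge_atTop (exp 1)] with lam hlam
      obtain ⟨hlam0, hlog⟩ := hlarge lam hlam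
      have : log lam ≠ 0 := (zero_lt_one.trans_le hlog).ne'
      field_simp
    rw [← mul_zero ((64 * M + 1) * d ^ 4)]
    exact ((tendsto_inv_atTop_zero.comp (tendsto_pow_atTop two_ne_zero)).const_mul _).congr' hev

theorem Wcorr_L4_small (d : ℝ) (hd : 0 < d) (Ω : Set E4)
    (hΩb : Bornology.IsBounded Ω) (ξ : E4) (hξ : ξ ∈ Ω) :
    ∃ C > 0, ∃ lam0 : ℝ,
      (∀ lam : ℝ, lam0 ≤ lam →
        (∫ x in Ω, (Wcorr lam (d / (lam * Real.log lam)) ξ x)^4)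
          ≤ C * lam^2 * (d / (lam * Real.log lam))^4 * (Real.log lam)^4) ∧
      Tendsto (fun lam : ℝ =>
          C * lam^2 * (d / (lam * Real.log lam))^4 * (Real.log lam)^4)
        atTop (nhds 0) :=
  Wcorr_L4_small_general d Ω ξ
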